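/- Suppose n ≥ 2, for each task q there is a unique dominating agent i* q (i.e., f (i* q) q > f j q for every agent j ≠ i* q), and the step sizes are large enough that γ i q * δ > 1 for all i, q, where δ = min_q (f (i* q) q − max_{j ≠ i* q} f j q) > 0. Let W̄ be the matrix with W̄ i q = 1 if i = i* q and W̄ i q = 0 otherwise. Then every PBRAG trajectory W satisfies W t i q = W̄ i q for all agents i, all tasks q, and all t ≥ 2. -/

import Mathlib

open Finset Filter

noncomputable def fsMax (s : Finset ℝ) : ℝ := s.max.unbotD 0

noncomputable def fsMin (s : Finset ℝ) : ℝ := s.min.untopD 0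

noncomputable def fsSubmax (s : Finset ℝ) : ℝ := fsMax (s.filter (fun x => x < fsMax s))

/-- Agent `i` is dominating for task `q`. -/
def Dominating {n m : ℕ} (f : Fin n → Fin m → ℝ) (i : Fin n) (q : Fin m) : Prop :=
  ∀ j, f j q ≤ f i q

/-- Maximum of `g j` over all `j ≠ i` (0 if that set is empty). -/
noncomputable def maxErase {n : ℕ} (i : Fin n) (g : Fin n → ℝ) : ℝ :=
  fsMax ((Finset.univ.erase i).image g)

/-- Utility of agent `i` in the weight game. -/
noncomputable def Uutil {n m : ℕ} (f : Fin n → Fin m → ℝ) (w : Fin n → Fin m → ℝ)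
    (i : Fin n) : ℝ :=
  ∑ q, (f i q * w i q - maxErase i (fun j => f j q * w j q) * w i q)

/-- All entries of the matrix lie in `[0,1]`. -/
def InUnit {n m : ℕ} (w : Fin n → Fin m → ℝ) : Prop :=
  ∀ i q, w i q ∈ Set.Icc (0 : ℝ) 1

/-- Nash equilibrium of the weight game. -/
def IsNashW {n m : ℕ} (f : Fin n → Fin m → ℝ) (w : Fin n → Fin m → ℝ) : Prop :=
  ∀ i, ∀ w' : Fin m → ℝ, (∀ q, w' q ∈ Set.Icc (0 : ℝ) 1) →
    Uutil f (Function.update w i w') i ≤ Uutil f w i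

noncomputable def clamp (x : ℝ) : ℝ := max 0 (min x 1)

/-- One step of the projected best-response ascending gradient dynamics. -/
noncomputable def pbrag {n m : ℕ} (f γ : Fin n → Fin m → ℝ)
    (w : Fin n → Fin m → ℝ) : Fin n → Fin m → ℝ :=
  fun i q => clamp (w i q + γ i q * (f i q - maxErase i (fun j => f j q * w j q)))

/- The dominant agent's net gradient f* − max_{j ≠ i*} f_j w_j is at least δ whatever the weights
are, since each rival bids at most f_j; one step with γδ > 1 therefore pushes its weight to 1. From
then on every other agent faces the full bid f* ≥ f_i + δ, so its gradient is at most −δ, and the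
next step pushes its weight to 0. -/

lemma le_fsMax {s : Finset ℝ} {x : ℝ} (hx : x ∈ s) : x ≤ fsMax s := by
  obtain ⟨y, hy⟩ := Finset.max_of_mem hx
  have hxy := Finset.le_max_of_eq hx hy
  simpa [fsMax, hy] using hxy

lemma fsMax_le {s : Finset ℝ} {b : ℝ} (hs : s.Nonempty) (h : ∀ y ∈ s, y ≤ b) : fsMax s ≤ b := by
  obtain ⟨y, hy⟩ := Finset.max_of_nonempty hs
  simpa [fsMax, hy] using h y (Finset.mem_of_max hy)

lemma fsMin_le {s : Finset ℝ} {x : ℝ} (hx : x ∈ s) : fsMin s ≤ x := by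
  obtain ⟨y, hy⟩ := Finset.min_of_mem hx
  have hyx := Finset.min_le_of_eq hx hy
  simpa [fsMin, hy] using hyx

lemma le_maxErase {n : ℕ} {i j : Fin n} (hj : j ≠ i) (g : Fin n → ℝ) : g j ≤ maxErase i g :=
  le_fsMax (Finset.mem_image_of_mem g (Finset.mem_erase.mpr ⟨hj, Finset.mem_univ j⟩))

lemma maxErase_mono {n : ℕ} {i : Fin n} {g g' : Fin n → ℝ} (h : ∀ j, j ≠ i → g j ≤ g' j) :
    maxErase i g ≤ maxErase i g' := by
  rcases (Finset.univ.erase i).eq_empty_or_nonempty with hempty | hne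
  · simp [maxErase, hempty]
  · refine fsMax_le (hne.image g) ?_
    rintro _ hy
    obtain ⟨j, hj, rfl⟩ := Finset.mem_image.mp hy
    exact (h j (Finset.ne_of_mem_erase hj)).trans (le_maxErase (Finset.ne_of_mem_erase hj) g')

lemma clamp_mem (x : ℝ) : clamp x ∈ Set.Icc (0 : ℝ) 1 :=
  ⟨le_max_left _ _, max_le zero_le_one (min_le_right _ _)⟩

lemma clamp_eq_one {x : ℝ} (h : 1 ≤ x) : clamp x = 1 := by
  simp [clamp, min_eq_right h]

lemma clamp_eq_zero {x : ℝ} (h : x ≤ 0) : clamp x = 0 := by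
  simp [clamp, min_eq_left (h.trans zero_le_one), h]

section Step

variable {n m : ℕ} {f γ w : Fin n → Fin m → ℝ} {i : Fin n} {q : Fin m} {d : ℝ}

lemma inUnit_pbrag (f γ w : Fin n → Fin m → ℝ) : InUnit (pbrag f γ w) :=
  fun _ _ => clamp_mem _

lemma inUnit_of_pbrag_trajectory {W : ℕ → Fin n → Fin m → ℝ} (hW0 : InUnit (W 0))
    (hWs : ∀ t, W (t + 1) = pbrag f γ (W t)) : ∀ t, InUnit (W t)
  | 0 => hW0
  | t + 1 => hWs t ▸ inUnit_pbrag f γ (W t)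

lemma pbrag_eq_one_of_le_margin (hf : ∀ j, 0 ≤ f j q) (hw : InUnit w) (hγ : 0 ≤ γ i q)
    (hlarge : 1 < γ i q * d) (hd : d ≤ f i q - maxErase i (fun j => f j q)) :
    pbrag f γ w i q = 1 := by
  have hbids : maxErase i (fun j => f j q * w j q) ≤ maxErase i (fun j => f j q) :=
    maxErase_mono fun j _ => mul_le_of_le_one_right (hf j) (hw j q).2
  have hgrad : γ i q * d ≤ γ i q * (f i q - maxErase i (fun j => f j q * w j q)) :=
    mul_le_mul_of_nonneg_left (by linarith) hγ
  exact clamp_eq_one (by linarith [(hw i q).1])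

lemma pbrag_eq_zero_of_saturated_rival {k : Fin n} (hki : k ≠ i) (hwk : w k q = 1)
    (hwi : w i q ≤ 1) (hγ : 0 ≤ γ i q) (hlarge : 1 < γ i q * d) (hd : d ≤ f k q - f i q) :
    pbrag f γ w i q = 0 := by
  have hbid : f k q ≤ maxErase i (fun j => f j q * w j q) := by
    simpa [hwk] using le_maxErase hki (fun j => f j q * w j q)
  have hgrad : γ i q * (f i q - maxErase i (fun j => f j q * w j q)) ≤ γ i q * (-d) :=
    mul_le_mul_of_nonneg_left (by linarith) hγ
  exact clamp_eq_zero (by linarith)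

end Step

theorem pbrag_two_step_convergence_general {n m : ℕ} (f : Fin n → Fin m → ℝ)
    (hf : ∀ i q, 0 ≤ f i q)
    (istar : Fin m → Fin n)
    (γ : Fin n → Fin m → ℝ) (hγ : ∀ i q, 0 < γ i q)
    (δ : ℝ)
    (hδ : δ = fsMin (Finset.univ.image
      (fun q => f (istar q) q - maxErase (istar q) (fun j => f j q))))
    (hlarge : ∀ i q, 1 < γ i q * δ)
    (W : ℕ → Fin n → Fin m → ℝ)
    (hW0 : InUnit (W 0)) (hWs : ∀ t, W (t + 1) = pbrag f γ (W t)) :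
    ∀ (i : Fin n) (q : Fin m) (t : ℕ), 2 ≤ t →
      W t i q = if i = istar q then 1 else 0 := by
  have hunit := inUnit_of_pbrag_trajectory hW0 hWs
  have hmargin : ∀ q, δ ≤ f (istar q) q - maxErase (istar q) (fun j => f j q) := fun q =>
    hδ ▸ fsMin_le (Finset.mem_image_of_mem _ (Finset.mem_univ q))
  have hsaturated : ∀ t q, W (t + 1) (istar q) q = 1 := fun t q =>
    hWs t ▸ pbrag_eq_one_of_le_margin (hf · q) (hunit t) (hγ _ q).le (hlarge _ q) (hmargin q)
  intro i q t ht
  obtain ⟨s, rfl⟩ : ∃ s, t = s + 1 + 1 := ⟨t - 2, by omega⟩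
  split_ifs with hi
  · exact hi ▸ hsaturated (s + 1) q
  · rw [hWs]
    refine pbrag_eq_zero_of_saturated_rival (Ne.symm hi) (hsaturated s q) (hunit _ i q).2
      (hγ i q).le (hlarge i q) ?_
    linarith [hmargin q, le_maxErase hi (fun j => f j q)]

theorem pbrag_two_step_convergence {n m : ℕ} (hn : 2 ≤ n) (f : Fin n → Fin m → ℝ)
    (hf : ∀ i q, 0 ≤ f i q)
    (istar : Fin m → Fin n)
    (hstar : ∀ q, ∀ j, j ≠ istar q → f j q < f (istar q) q)
    (γ : Fin n → Fin m → ℝ) (hγ : ∀ i q, 0 < γ i q)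
    (δ : ℝ)
    (hδ : δ = fsMin (Finset.univ.image
      (fun q => f (istar q) q - maxErase (istar q) (fun j => f j q))))
    (hδpos : 0 < δ)
    (hlarge : ∀ i q, 1 < γ i q * δ)
    (W : ℕ → Fin n → Fin m → ℝ)
    (hW0 : InUnit (W 0)) (hWs : ∀ t, W (t + 1) = pbrag f γ (W t)) :
    ∀ (i : Fin n) (q : Fin m) (t : ℕ), 2 ≤ t →
      W t i q = if i = istar q then 1 else 0 :=
  pbrag_two_step_convergence_general f hf istar γ hγ δ hδ hlarge W hW0 hWs
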